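/- Conditional gradient descent step bound: Let f be convex differentiable with curvature constant Γ over convex set C, g(U) = max_{s∈C}⟨U − s, ∇f(U)⟩ the duality gap, and suppose the noisy linear minimization oracle returns Ũ ∈ C with ⟨Ũ, ∇f(U_k)⟩ ≤ min_{V∈C}⟨V, ∇f(U_k)⟩ + 2 sup_{V∈C}|⟨V, ζ_k(V)⟩|. Then the update U_{k+1} = (1−μ)U_k + μ Ũ satisfies f(U_{k+1}) ≤ f(U_k) − μ g(U_k) + 2μ sup_{V∈C}|⟨V, ζ_k(V)⟩| + (μ²/2)Γ. -/
import Mathlib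


open scoped RealInnerProductSpace

/-- One step of the noisy conditional gradient (Frank–Wolfe) method decreases the
objective up to the duality gap, noise, and curvature terms. -/
theorem stmt_13 {n : ℕ} (C : Set (EuclideanSpace ℝ (Fin n)))
    (hCconv : Convex ℝ C) (hCcomp : IsCompact C) (hCne : C.Nonempty)
    (f : EuclideanSpace ℝ (Fin n) → ℝ)
    (f' : EuclideanSpace ℝ (Fin n) → EuclideanSpace ℝ (Fin n))
    (hconv : ConvexOn ℝ C f) (hgrad : ∀ x, HasGradientAt f (f' x) x)
    (Γ : ℝ)
    (hcurv : ∀ x₁ ∈ C, ∀ x₂ ∈ C, ∀ γ : ℝ, 0 < γ → γ ≤ 1 →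
      f ((1 - γ) • x₁ + γ • x₂) ≤ f x₁ + γ * ⟪x₂ - x₁, f' x₁⟫ + γ ^ 2 / 2 * Γ)
    (Uk : EuclideanSpace ℝ (Fin n)) (hUk : Uk ∈ C)
    (gk : ℝ) (hgk : IsGreatest {y | ∃ s ∈ C, y = ⟪Uk - s, f' Uk⟫} gk)
    (mval : ℝ) (hmval : IsLeast {y | ∃ V ∈ C, y = ⟪V, f' Uk⟫} mval)
    (N : ℝ) (hN : 0 ≤ N)
    (Ut : EuclideanSpace ℝ (Fin n)) (hUt : Ut ∈ C)
    (horacle : ⟪Ut, f' Uk⟫ ≤ mval + 2 * N)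
    (μ : ℝ) (hμ0 : 0 < μ) (hμ1 : μ ≤ 1) :
    f ((1 - μ) • Uk + μ • Ut) ≤ f Uk - μ * gk + 2 * μ * N + μ ^ 2 / 2 * Γ := by
  obtain ⟨s, hs, hgeq⟩ := hgk.1
  have hms : mval ≤ ⟪s, f' Uk⟫ := hmval.2 ⟨s, hs, rfl⟩
  have h1 : ⟪Ut - Uk, f' Uk⟫ ≤ -gk + 2 * N := by
    have : ⟪Ut - Uk, f' Uk⟫ = ⟪Ut, f' Uk⟫ - ⟪Uk, f' Uk⟫ := inner_sub_left _ _ _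
    have hgk' : gk ≤ ⟪Uk, f' Uk⟫ - mval := by
      rw [hgeq, inner_sub_left]; linarith
    linarith
  have := hcurv Uk hUk Ut hUt μ hμ0 hμ1
  nlinarith [sq_nonneg μ]
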